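/- arXiv:1212.0407 — 2 statements merged into one kernel-verified Lean document; each statement's English description precedes it below -/
import Mathlib

section
/- If a tripartite state factorizes as ρ_{SBR} = ρ_{S R1} ⊗ |ψ_{B R2}⟩⟨ψ_{B R2}| with R = R1 ⊗ R2, then the entanglement of formation between SB and R is additive across the factors: E_F^{SB-R}(ρ_{SBR}) = E_F^{S-R1}(ρ_{S R1}) + E^{B-R2}(|ψ_{B R2}⟩), where the second term is the entanglement entropy of the pure state. -/
open Matrix BigOperators
open scoped Kronecker ComplexOrder

noncomputable section

/-- A density matrix: positive semidefinite with unit trace. -/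
def IsDensityMatrix {n : Type*} [Fintype n] (ρ : Matrix n n ℂ) : Prop :=
  ρ.PosSemidef ∧ ρ.trace = 1

/-- von Neumann entropy `S(ρ) = -tr(ρ log ρ)`, computed via the eigenvalues
(with the convention `0 log 0 = 0`); junk value `0` for non-Hermitian input. -/
noncomputable def vnEntropy {n : Type*} [Fintype n] [DecidableEq n]
    (ρ : Matrix n n ℂ) : ℝ :=
  if h : ρ.IsHermitian then -∑ i, h.eigenvalues i * Real.log (h.eigenvalues i) else 0

/-- Matrix logarithm of a Hermitian matrix (taken on the support / spectrum);
junk value `0` for non-Hermitian input. -/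
noncomputable def matLog {n : Type*} [Fintype n] [DecidableEq n]
    (ρ : Matrix n n ℂ) : Matrix n n ℂ :=
  if h : ρ.IsHermitian then
    (h.eigenvectorUnitary : Matrix n n ℂ) *
      Matrix.diagonal (fun i => (Real.log (h.eigenvalues i) : ℂ)) *
      star (h.eigenvectorUnitary : Matrix n n ℂ)
  else 0

/-- Quantum relative entropy `D(ρ‖σ) = tr[ρ (log ρ - log σ)]`. -/
noncomputable def relEntropy {n : Type*} [Fintype n] [DecidableEq n]
    (ρ σ : Matrix n n ℂ) : ℝ :=
  ((ρ * (matLog ρ - matLog σ)).trace).re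

/-- The rank-one projector `|ψ⟩⟨ψ|` associated with a vector `ψ`. -/
def pureState {n : Type*} (ψ : n → ℂ) : Matrix n n ℂ :=
  Matrix.vecMulVec ψ (star ψ)

/-- Partial trace over the first tensor factor. -/
noncomputable def trFst {a b : Type*} [Fintype a]
    (M : Matrix (a × b) (a × b) ℂ) : Matrix b b ℂ :=
  Matrix.of fun i j => ∑ k, M (k, i) (k, j)

/-- Partial trace over the second tensor factor. -/
noncomputable def trSnd {a b : Type*} [Fintype b]
    (M : Matrix (a × b) (a × b) ℂ) : Matrix a a ℂ :=
  Matrix.of fun i j => ∑ k, M (i, k) (j, k)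

/-- `ψ` is a unit vector. -/
def IsUnitVec {n : Type*} [Fintype n] (ψ : n → ℂ) : Prop :=
  ∑ i, Complex.normSq (ψ i) = 1

/-- Entanglement entropy of a bipartite pure state:
the entropy of the reduced state on the first factor. -/
noncomputable def entEntropy {a b : Type*} [Fintype a] [Fintype b] [DecidableEq a]
    (ψ : a × b → ℂ) : ℝ :=
  vnEntropy (trSnd (pureState ψ))

/-- Entanglement of formation: infimum of the average pure-state entanglement
entropy over all finite pure-state decompositions of `ρ`. -/
noncomputable def entFormation {a b : Type*} [Fintype a] [Fintype b]
    [DecidableEq a] (ρ : Matrix (a × b) (a × b) ℂ) : ℝ :=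
  sInf { x | ∃ (m : ℕ) (q : Fin m → ℝ) (φ : Fin m → a × b → ℂ),
    (∀ j, 0 ≤ q j) ∧ (∑ j, q j = 1) ∧ (∀ j, IsUnitVec (φ j)) ∧
    ρ = ∑ j, (q j : ℂ) • pureState (φ j) ∧
    x = ∑ j, q j * entEntropy (φ j) }

/-- `e` is an orthonormal basis (given as a family of vectors) of the space `n → ℂ`. -/
def IsONBasis {ι n : Type*} [Fintype ι] [Fintype n] [DecidableEq ι] [DecidableEq n]
    (e : ι → n → ℂ) : Prop :=
  (∀ a b, ∑ x, (starRingEnd ℂ) (e a x) * e b x = if a = b then 1 else 0) ∧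
  (∀ x y, ∑ a, e a x * (starRingEnd ℂ) (e a y) = if x = y then 1 else 0)

/-- The binary entropy function. -/
noncomputable def binEnt (x : ℝ) : ℝ :=
  -(x * Real.log x) - (1 - x) * Real.log (1 - x)

end

/-!
A vector `χ` carrying positive weight in a pure-state decomposition of a matrix `M` is orthogonal
to the kernel of `M`. The kernel of `ρ ⊗ |ψ⟩⟨ψ|` contains every `u ⊗ η` with `η ⊥ ψ`, so such a `χ`
has the form `φ ⊗ ψ`. Hence the pure-state decompositions of `ρ ⊗ |ψ⟩⟨ψ|` are, up to terms of
weight zero, those of `ρ` tensored with `ψ`. The reduced state of `φ ⊗ ψ` is the Kronecker product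
of the reduced states, and von Neumann entropy is additive on Kronecker products of density
matrices. So the set of averages whose infimum is `E_F(ρ ⊗ |ψ⟩⟨ψ|)` is the set for `E_F(ρ)`
translated by `E(ψ)`.
-/

open Real

section States

variable {n a c : Type*} [Fintype n] [Fintype c]

lemma isUnitVec_iff {ψ : n → ℂ} : IsUnitVec ψ ↔ star ψ ⬝ᵥ ψ = 1 := by
  simp only [IsUnitVec, dotProduct, Pi.star_apply, RCLike.star_def,
    ← Complex.normSq_eq_conj_mul_self]
  norm_cast

lemma pureState_ne_zero {ψ : n → ℂ} (hψ : IsUnitVec ψ) : pureState ψ ≠ 0 := by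
  intro h
  have htr := congrArg trace h
  rw [pureState, trace_vecMulVec, dotProduct_comm, isUnitVec_iff.mp hψ, trace_zero] at htr
  exact one_ne_zero htr

lemma trSnd_pureState (φ : a × c → ℂ) :
    trSnd (pureState φ) = of (fun i k => φ (i, k)) * (of fun i k => φ (i, k))ᴴ := by
  ext i j
  simp [trSnd, pureState, mul_apply, vecMulVec_apply]

lemma posSemidef_trSnd_pureState [Fintype a] (φ : a × c → ℂ) :
    (trSnd (pureState φ)).PosSemidef := by
  rw [trSnd_pureState]
  exact posSemidef_self_mul_conjTranspose _

lemma trace_trSnd_pureState [Fintype a] {φ : a × c → ℂ} (hφ : IsUnitVec φ) :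
    (trSnd (pureState φ)).trace = 1 := by
  rw [← isUnitVec_iff.mp hφ]
  simp [trace, trSnd, pureState, vecMulVec_apply, dotProduct, Fintype.sum_prod_type, mul_comm]

end States

section Spectral

variable {n m : Type*} [Fintype n] [DecidableEq n] [Fintype m] [DecidableEq m]

lemma Matrix.IsHermitian.vnEntropy_eq {A : Matrix n n ℂ} (hA : A.IsHermitian) :
    vnEntropy A = ∑ i, negMulLog (hA.eigenvalues i) := by
  simp [vnEntropy, hA, negMulLog]

lemma Matrix.IsHermitian.eq_unitary_conj_diagonal {A : Matrix n n ℂ} (hA : A.IsHermitian) :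
    A = (hA.eigenvectorUnitary : Matrix n n ℂ) * diagonal (fun i => (hA.eigenvalues i : ℂ)) *
      star (hA.eigenvectorUnitary : Matrix n n ℂ) :=
  hA.spectral_theorem

lemma Matrix.IsHermitian.sum_eigenvalues_eq_one {A : Matrix n n ℂ} (hA : A.IsHermitian)
    (htr : A.trace = 1) : ∑ i, hA.eigenvalues i = 1 := by
  have h := hA.trace_eq_sum_eigenvalues.symm.trans htr
  exact RCLike.ofReal_injective (K := ℂ) (by simpa using h)

open Polynomial in
lemma vnEntropy_unitary_conj_diagonal {W : Matrix n n ℂ} (hW : W ∈ unitaryGroup n ℂ)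
    (d : n → ℝ) :
    vnEntropy (W * diagonal (fun i => (d i : ℂ)) * star W) = ∑ i, negMulLog (d i) := by
  have hH : (W * diagonal (fun i => (d i : ℂ)) * star W).IsHermitian :=
    isHermitian_mul_mul_conjTranspose W (isHermitian_diagonal_of_self_adjoint _
      (funext fun i => Complex.conj_ofReal (d i)))
  have hroots := hH.roots_charpoly_eq_eigenvalues
  rw [charpoly_mul_comm, ← Matrix.mul_assoc, Unitary.star_mul_self_of_mem hW, Matrix.one_mul,
    charpoly_diagonal, roots_prod _ _ (by simp [Finset.prod_ne_zero_iff, X_sub_C_ne_zero])]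
    at hroots
  rw [hH.vnEntropy_eq]
  simpa using congrArg (fun s : Multiset ℂ => (s.map (negMulLog ∘ Complex.re)).sum) hroots.symm

lemma vnEntropy_kronecker {A : Matrix n n ℂ} {B : Matrix m m ℂ} (hA : A.IsHermitian)
    (hB : B.IsHermitian) (htA : A.trace = 1) (htB : B.trace = 1) :
    vnEntropy (A ⊗ₖ B) = vnEntropy A + vnEntropy B := by
  set U := (hA.eigenvectorUnitary : Matrix n n ℂ)
  set V := (hB.eigenvectorUnitary : Matrix m m ℂ)
  have hAB : A ⊗ₖ B = (U ⊗ₖ V) *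
      diagonal (fun p : n × m => ((hA.eigenvalues p.1 * hB.eigenvalues p.2 : ℝ) : ℂ)) *
      star (U ⊗ₖ V) := by
    conv_lhs => rw [hA.eq_unitary_conj_diagonal, hB.eq_unitary_conj_diagonal]
    rw [mul_kronecker_mul, mul_kronecker_mul, diagonal_kronecker_diagonal]
    simp [star_eq_conjTranspose, conjTranspose_kronecker, U, V]
  rw [hAB, vnEntropy_unitary_conj_diagonal (kronecker_mem_unitary hA.eigenvectorUnitary.2
    hB.eigenvectorUnitary.2), hA.vnEntropy_eq, hB.vnEntropy_eq]
  simp only [negMulLog_mul, Fintype.sum_prod_type, Finset.sum_add_distrib, ← Finset.sum_mul,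
    ← Finset.mul_sum, hA.sum_eigenvalues_eq_one htA, hB.sum_eigenvalues_eq_one htB, one_mul]

lemma Matrix.IsHermitian.eq_sum_smul_pureState {A : Matrix n n ℂ} (hA : A.IsHermitian) :
    A = ∑ i, (hA.eigenvalues i : ℂ) • pureState ⇑(hA.eigenvectorBasis i) := by
  conv_lhs => rw [hA.eq_unitary_conj_diagonal]
  ext x y
  simp [mul_apply, diagonal_apply, pureState, vecMulVec_apply, Matrix.sum_apply]
  exact Finset.sum_congr rfl fun i _ => by ring

lemma Matrix.IsHermitian.isUnitVec_eigenvectorBasis {A : Matrix n n ℂ} (hA : A.IsHermitian)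
    (i : n) : IsUnitVec ⇑(hA.eigenvectorBasis i) := by
  rw [isUnitVec_iff, dotProduct_comm, ← EuclideanSpace.inner_eq_star_dotProduct,
    inner_self_eq_norm_sq_to_K, hA.eigenvectorBasis.orthonormal.1 i]
  simp

lemma vnEntropy_nonneg {A : Matrix n n ℂ} (hA : A.PosSemidef) (htr : A.trace = 1) :
    0 ≤ vnEntropy A := by
  rw [hA.1.vnEntropy_eq]
  refine Finset.sum_nonneg fun i _ => negMulLog_nonneg (hA.eigenvalues_nonneg i) ?_
  rw [← hA.1.sum_eigenvalues_eq_one htr]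
  exact Finset.single_le_sum (fun j _ => hA.eigenvalues_nonneg j) (Finset.mem_univ i)

lemma entEntropy_nonneg {a c : Type*} [Fintype a] [Fintype c] [DecidableEq a] {φ : a × c → ℂ}
    (hφ : IsUnitVec φ) :
    0 ≤ entEntropy φ :=
  vnEntropy_nonneg (posSemidef_trSnd_pureState φ) (trace_trSnd_pureState hφ)

end Spectral

section Tensor

variable {s b r1 r2 : Type*}

/-! Tensor products of bipartite objects on `s × r1` and `b × r2`, regrouped for the cut
`(s × b) | (r1 × r2)`. -/

def tensorVec (φ : s × r1 → ℂ) (ψ : b × r2 → ℂ) : (s × b) × (r1 × r2) → ℂ :=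
  fun z => φ (z.1.1, z.2.1) * ψ (z.1.2, z.2.2)

def tensorMat (A : Matrix (s × r1) (s × r1) ℂ) (B : Matrix (b × r2) (b × r2) ℂ) :
    Matrix ((s × b) × (r1 × r2)) ((s × b) × (r1 × r2)) ℂ :=
  (A ⊗ₖ B).submatrix (Equiv.prodProdProdComm s b r1 r2) (Equiv.prodProdProdComm s b r1 r2)

@[simp]
lemma tensorMat_apply (A : Matrix (s × r1) (s × r1) ℂ) (B : Matrix (b × r2) (b × r2) ℂ)
    (z z' : (s × b) × (r1 × r2)) :
    tensorMat A B z z' = A (z.1.1, z.2.1) (z'.1.1, z'.2.1) * B (z.1.2, z.2.2) (z'.1.2, z'.2.2) :=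
  rfl

lemma pureState_tensorVec (φ : s × r1 → ℂ) (ψ : b × r2 → ℂ) :
    pureState (tensorVec φ ψ) = tensorMat (pureState φ) (pureState ψ) := by
  ext z z'
  simp only [pureState, tensorVec, tensorMat_apply, vecMulVec_apply, Pi.star_apply, star_mul']
  ring

lemma tensorMat_sum_smul_left {ι : Type*} (t : Finset ι) (w : ι → ℂ)
    (A : ι → Matrix (s × r1) (s × r1) ℂ) (B : Matrix (b × r2) (b × r2) ℂ) :
    tensorMat (∑ j ∈ t, w j • A j) B = ∑ j ∈ t, w j • tensorMat (A j) B := by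
  ext z z'
  simp [Matrix.sum_apply, Finset.sum_mul, mul_assoc]

lemma tensorMat_left_injective {B : Matrix (b × r2) (b × r2) ℂ} (hB : B ≠ 0) :
    Function.Injective fun A : Matrix (s × r1) (s × r1) ℂ => tensorMat A B := by
  obtain ⟨y, y', hyy'⟩ : ∃ y y', B y y' ≠ 0 := by
    by_contra! h
    exact hB (Matrix.ext h)
  intro A A' h
  ext x x'
  have := congrFun (congrFun h ((x.1, y.1), (x.2, y.2))) ((x'.1, y'.1), (x'.2, y'.2))
  exact mul_right_cancel₀ hyy' this

variable [Fintype r1] [Fintype r2]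

lemma trSnd_tensorMat (A : Matrix (s × r1) (s × r1) ℂ) (B : Matrix (b × r2) (b × r2) ℂ) :
    trSnd (tensorMat A B) = trSnd A ⊗ₖ trSnd B := by
  ext x x'
  simp [trSnd, Fintype.sum_prod_type, Finset.sum_mul_sum]

variable [Fintype s] [Fintype b]

lemma sum_interleave {M : Type*} [AddCommMonoid M] (f : (s × b) × (r1 × r2) → M) :
    ∑ z, f z = ∑ x : s × r1, ∑ y : b × r2, f ((x.1, y.1), (x.2, y.2)) := by
  rw [← Equiv.sum_comp (Equiv.prodProdProdComm s r1 b r2) f, Fintype.sum_prod_type]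
  rfl

lemma tensorMat_mulVec_tensorVec (A : Matrix (s × r1) (s × r1) ℂ)
    (B : Matrix (b × r2) (b × r2) ℂ) (u : s × r1 → ℂ) (v : b × r2 → ℂ) :
    tensorMat A B *ᵥ tensorVec u v = tensorVec (A *ᵥ u) (B *ᵥ v) := by
  ext z
  simp only [mulVec, dotProduct]
  rw [sum_interleave]
  simp only [tensorMat_apply, tensorVec, mulVec, dotProduct, Finset.sum_mul_sum]
  exact Finset.sum_congr rfl fun x _ => Finset.sum_congr rfl fun y _ => by ring

lemma star_tensorVec_dotProduct (u u' : s × r1 → ℂ) (v v' : b × r2 → ℂ) :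
    star (tensorVec u v) ⬝ᵥ tensorVec u' v' = (star u ⬝ᵥ u') * (star v ⬝ᵥ v') := by
  simp only [dotProduct]
  rw [sum_interleave]
  simp only [tensorVec, Pi.star_apply, star_mul', Finset.sum_mul_sum]
  exact Finset.sum_congr rfl fun x _ => Finset.sum_congr rfl fun y _ => by ring

lemma isUnitVec_tensorVec_iff {φ : s × r1 → ℂ} {ψ : b × r2 → ℂ} (hψ : IsUnitVec ψ) :
    IsUnitVec (tensorVec φ ψ) ↔ IsUnitVec φ := by
  rw [isUnitVec_iff, isUnitVec_iff, star_tensorVec_dotProduct, isUnitVec_iff.mp hψ, mul_one]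

lemma entEntropy_tensorVec [DecidableEq s] [DecidableEq b] {φ : s × r1 → ℂ} {ψ : b × r2 → ℂ}
    (hφ : IsUnitVec φ) (hψ : IsUnitVec ψ) :
    entEntropy (tensorVec φ ψ) = entEntropy φ + entEntropy ψ := by
  rw [entEntropy, pureState_tensorVec, trSnd_tensorMat]
  exact vnEntropy_kronecker (posSemidef_trSnd_pureState φ).1 (posSemidef_trSnd_pureState ψ).1
    (trace_trSnd_pureState hφ) (trace_trSnd_pureState hψ)

end Tensor

section Factorization

variable {n ι : Type*} [Fintype n] [Fintype ι]

lemma star_dotProduct_pureState_mulVec (χ v : n → ℂ) :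
    star v ⬝ᵥ (pureState χ *ᵥ v) = Complex.normSq (star v ⬝ᵥ χ) := by
  rw [pureState, vecMulVec_mulVec, dotProduct_smul, star_dotProduct, op_smul_eq_mul,
    Complex.normSq_eq_conj_mul_self, RCLike.star_def, mul_comm]

lemma star_dotProduct_eq_zero_of_mulVec_eq_zero {q : ι → ℝ} {χ : ι → n → ℂ} {v : n → ℂ}
    (hq : ∀ j, 0 ≤ q j) (hv : (∑ j, (q j : ℂ) • pureState (χ j)) *ᵥ v = 0) {j : ι}
    (hj : 0 < q j) : star v ⬝ᵥ χ j = 0 := by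
  have hsum : ∑ j, q j * Complex.normSq (star v ⬝ᵥ χ j) = 0 := by
    have h := congrArg (star v ⬝ᵥ ·) hv
    simp only [Matrix.sum_mulVec, smul_mulVec, dotProduct_sum, dotProduct_smul,
      star_dotProduct_pureState_mulVec, dotProduct_zero, smul_eq_mul] at h
    exact_mod_cast h
  have hterm := (Finset.sum_eq_zero_iff_of_nonneg fun i _ =>
    mul_nonneg (hq i) (Complex.normSq_nonneg _)).mp hsum j (Finset.mem_univ j)
  exact Complex.normSq_eq_zero.mp ((mul_eq_zero.mp hterm).resolve_left hj.ne')

lemma eq_smul_of_forall_orthogonal {ψ w : n → ℂ} (hψ : IsUnitVec ψ)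
    (h : ∀ η, star ψ ⬝ᵥ η = 0 → star η ⬝ᵥ w = 0) : w = (star ψ ⬝ᵥ w) • ψ := by
  set η := w - (star ψ ⬝ᵥ w) • ψ
  have hη : star ψ ⬝ᵥ η = 0 := by
    simp [η, dotProduct_sub, isUnitVec_iff.mp hψ]
  have hηψ : star η ⬝ᵥ ψ = 0 := by
    rw [star_dotProduct, hη, star_zero]
  have hηη : star η ⬝ᵥ η = 0 := by
    rw [show star η ⬝ᵥ η = star η ⬝ᵥ w - (star ψ ⬝ᵥ w) * (star η ⬝ᵥ ψ) by
      simp [η, dotProduct_sub]]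
    rw [h η hη, hηψ, mul_zero, sub_zero]
  exact sub_eq_zero.mp (dotProduct_star_self_eq_zero.mp hηη)

end Factorization

lemma exists_tensorVec_eq_of_decomp {s b r1 r2 ι : Type*} [Fintype s] [Fintype b] [Fintype r1]
    [Fintype r2] [Fintype ι] {ρ : Matrix (s × r1) (s × r1) ℂ} {ψ : b × r2 → ℂ}
    (hψ : IsUnitVec ψ) {q : ι → ℝ} {χ : ι → (s × b) × (r1 × r2) → ℂ} (hq : ∀ j, 0 ≤ q j)
    (hdec : tensorMat ρ (pureState ψ) = ∑ j, (q j : ℂ) • pureState (χ j)) {j : ι}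
    (hj : 0 < q j) : ∃ φ, χ j = tensorVec φ ψ := by
  classical
  refine ⟨fun x => star ψ ⬝ᵥ fun y => χ j ((x.1, y.1), (x.2, y.2)), funext fun z => ?_⟩
  have hslice := eq_smul_of_forall_orthogonal hψ
    (w := fun y => χ j ((z.1.1, y.1), (z.2.1, y.2))) fun η hη => ?_
  · exact congrFun hslice (z.1.2, z.2.2)
  have hv : tensorMat ρ (pureState ψ) *ᵥ tensorVec (Pi.single (z.1.1, z.2.1) 1) η = 0 := by
    rw [tensorMat_mulVec_tensorVec, pureState, vecMulVec_mulVec, hη, MulOpposite.op_zero,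
      zero_smul]
    ext
    simp [tensorVec]
  rw [← star_dotProduct_eq_zero_of_mulVec_eq_zero hq (hdec ▸ hv) hj, dotProduct, dotProduct,
    sum_interleave]
  simp [tensorVec, Pi.single_apply, apply_ite (starRingEnd ℂ), ite_mul, Finset.sum_ite_irrel]

section Decompositions

variable {a c : Type*} [Fintype a] [Fintype c] [DecidableEq a]

def decompEntanglements (ρ : Matrix (a × c) (a × c) ℂ) : Set ℝ :=
  { x | ∃ (m : ℕ) (q : Fin m → ℝ) (φ : Fin m → a × c → ℂ),
    (∀ j, 0 ≤ q j) ∧ (∑ j, q j = 1) ∧ (∀ j, IsUnitVec (φ j)) ∧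
    ρ = ∑ j, (q j : ℂ) • pureState (φ j) ∧
    x = ∑ j, q j * entEntropy (φ j) }

lemma entFormation_eq_sInf (ρ : Matrix (a × c) (a × c) ℂ) :
    entFormation ρ = sInf (decompEntanglements ρ) :=
  rfl

lemma bddBelow_decompEntanglements (ρ : Matrix (a × c) (a × c) ℂ) :
    BddBelow (decompEntanglements ρ) := by
  refine ⟨0, ?_⟩
  rintro _ ⟨m, q, φ, hq, -, hφ, -, rfl⟩
  exact Finset.sum_nonneg fun j _ => mul_nonneg (hq j) (entEntropy_nonneg (hφ j))

lemma IsDensityMatrix.decompEntanglements_nonempty [DecidableEq c]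
    {ρ : Matrix (a × c) (a × c) ℂ} (hρ : IsDensityMatrix ρ) :
    (decompEntanglements ρ).Nonempty := by
  obtain ⟨hpsd, htr⟩ := hρ
  let e := (Fintype.equivFin (a × c)).symm
  refine ⟨_, Fintype.card (a × c), fun j => hpsd.1.eigenvalues (e j),
    fun j => ⇑(hpsd.1.eigenvectorBasis (e j)), fun j => hpsd.eigenvalues_nonneg _, ?_,
    fun j => hpsd.1.isUnitVec_eigenvectorBasis _, ?_, rfl⟩
  · rw [Equiv.sum_comp e hpsd.1.eigenvalues]
    exact hpsd.1.sum_eigenvalues_eq_one htr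
  · exact hpsd.1.eq_sum_smul_pureState.trans (Equiv.sum_comp e _).symm

end Decompositions

lemma exists_factorization_of_decomp {s b r1 r2 ι : Type*} [Fintype s] [Fintype b]
    [Fintype r1] [Fintype r2] [Fintype ι] {ρ : Matrix (s × r1) (s × r1) ℂ} {ψ : b × r2 → ℂ}
    (hψ : IsUnitVec ψ) {q : ι → ℝ} {χ : ι → (s × b) × (r1 × r2) → ℂ} (hq : ∀ j, 0 ≤ q j)
    (hq1 : ∑ j, q j = 1) (hχ : ∀ j, IsUnitVec (χ j))
    (hdec : tensorMat ρ (pureState ψ) = ∑ j, (q j : ℂ) • pureState (χ j)) :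
    ∃ φ : ι → s × r1 → ℂ, (∀ j, IsUnitVec (φ j)) ∧ ∀ j, q j = 0 ∨ χ j = tensorVec (φ j) ψ := by
  obtain ⟨j₀, -, hj₀⟩ := Finset.exists_ne_zero_of_sum_ne_zero (hq1 ▸ one_ne_zero)
  obtain ⟨φ₀, hφ₀⟩ := exists_tensorVec_eq_of_decomp hψ hq hdec ((hq j₀).lt_of_ne' hj₀)
  -- components of weight zero need not factor; they get the unit vector `φ₀`
  have hfactor : ∀ j, ∃ φ, IsUnitVec φ ∧ (q j = 0 ∨ χ j = tensorVec φ ψ) := by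
    intro j
    rcases (hq j).eq_or_lt with h | h
    · exact ⟨φ₀, (isUnitVec_tensorVec_iff hψ).mp (hφ₀ ▸ hχ j₀), Or.inl h.symm⟩
    · obtain ⟨φ, hφ⟩ := exists_tensorVec_eq_of_decomp hψ hq hdec h
      exact ⟨φ, (isUnitVec_tensorVec_iff hψ).mp (hφ ▸ hχ j), Or.inr hφ⟩
  choose φ hφ hχφ using hfactor
  exact ⟨φ, hφ, hχφ⟩

lemma decompEntanglements_tensorMat {s b r1 r2 : Type*} [Fintype s] [Fintype b] [Fintype r1]
    [Fintype r2] [DecidableEq s] [DecidableEq b] {ρ : Matrix (s × r1) (s × r1) ℂ}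
    {ψ : b × r2 → ℂ} (hψ : IsUnitVec ψ) :
    decompEntanglements (tensorMat ρ (pureState ψ)) =
      (· + entEntropy ψ) '' decompEntanglements ρ := by
  ext x
  constructor
  · rintro ⟨m, q, χ, hq, hq1, hχ, hdec, rfl⟩
    obtain ⟨φ, hφ, hχφ⟩ := exists_factorization_of_decomp hψ hq hq1 hχ hdec
    have hstate : ∀ j, (q j : ℂ) • pureState (χ j) = (q j : ℂ) • pureState (tensorVec (φ j) ψ) :=
      fun j => by rcases hχφ j with h | h <;> simp [h]
    have hent : ∀ j, q j * entEntropy (χ j) = q j * entEntropy (tensorVec (φ j) ψ) :=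
      fun j => by rcases hχφ j with h | h <;> simp [h]
    refine ⟨∑ j, q j * entEntropy (φ j), ⟨m, q, φ, hq, hq1, hφ, ?_, rfl⟩, ?_⟩
    · apply tensorMat_left_injective (pureState_ne_zero hψ)
      simp only [hdec, tensorMat_sum_smul_left, hstate, pureState_tensorVec]
    · simp only [hent, entEntropy_tensorVec (hφ _) hψ, mul_add, Finset.sum_add_distrib,
        ← Finset.sum_mul, hq1, one_mul]
  · rintro ⟨_, ⟨m, q, φ, hq, hq1, hφ, hdec, rfl⟩, rfl⟩
    refine ⟨m, q, fun j => tensorVec (φ j) ψ, hq, hq1,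
      fun j => (isUnitVec_tensorVec_iff hψ).mpr (hφ j), ?_, ?_⟩
    · simp only [hdec, tensorMat_sum_smul_left, pureState_tensorVec]
    · simp only [entEntropy_tensorVec (hφ _) hψ, mul_add, Finset.sum_add_distrib,
        ← Finset.sum_mul, hq1, one_mul]

theorem entFormation_tensor_pure_general
    {s b r1 r2 : Type*} [Fintype s] [Fintype b] [Fintype r1] [Fintype r2]
    [DecidableEq s] [DecidableEq b]
    (ρSR1 : Matrix (s × r1) (s × r1) ℂ) (hρ : IsDensityMatrix ρSR1)
    (ψ : b × r2 → ℂ) (hψ : IsUnitVec ψ) :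
    entFormation
      (Matrix.submatrix (ρSR1 ⊗ₖ pureState ψ)
        (fun x : (s × b) × (r1 × r2) => ((x.1.1, x.2.1), (x.1.2, x.2.2)))
        (fun x : (s × b) × (r1 × r2) => ((x.1.1, x.2.1), (x.1.2, x.2.2)))) =
      entFormation ρSR1 + entEntropy ψ := by
  classical
  change entFormation (tensorMat ρSR1 (pureState ψ)) = _
  rw [entFormation_eq_sInf, entFormation_eq_sInf, decompEntanglements_tensorMat hψ]
  exact ((OrderIso.addRight (entEntropy ψ)).map_csInf' hρ.decompEntanglements_nonempty
    (bddBelow_decompEntanglements ρSR1)).symm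

/-- additivity of entanglement of formation for a product state
`ρ_{SBR} = ρ_{S R1} ⊗ |ψ_{B R2}⟩⟨ψ_{B R2}|` across the bipartition
`(S⊗B)` vs `(R1⊗R2)`. -/
theorem entFormation_tensor_pure
    {s b r1 r2 : Type*} [Fintype s] [Fintype b] [Fintype r1] [Fintype r2]
    [DecidableEq s] [DecidableEq b] [DecidableEq r1] [DecidableEq r2]
    (ρSR1 : Matrix (s × r1) (s × r1) ℂ) (hρ : IsDensityMatrix ρSR1)
    (ψ : b × r2 → ℂ) (hψ : IsUnitVec ψ) :
    entFormation
      (Matrix.submatrix (ρSR1 ⊗ₖ pureState ψ)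
        (fun x : (s × b) × (r1 × r2) => ((x.1.1, x.2.1), (x.1.2, x.2.2)))
        (fun x : (s × b) × (r1 × r2) => ((x.1.1, x.2.1), (x.1.2, x.2.2)))) =
      entFormation ρSR1 + entEntropy ψ :=
  entFormation_tensor_pure_general ρSR1 hρ ψ hψ
end

section
/- If a thermodynamic process with binary measurement satisfies Σ_{k=0,1} p_k S(ρ_2^{(k)}) = S(Σ_{k=0,1} p_k U_k ρ_2^{(k)} U_k†) for some unitaries U_0, U_1 (with p_0, p_1 > 0), then ρ_2^{(0)} and ρ_2^{(1)} are unitarily equivalent: there exists a unitary W with W ρ_2^{(0)} W† = ρ_2^{(1)}. -/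
open Matrix BigOperators
open scoped Kronecker ComplexOrder

/-!
Put `σ = ∑ₖ pₖ Uₖ ρₖ Uₖ†`. Linearity of `ρ ↦ tr (ρ log σ)` gives the mixing identity
`S(σ) = ∑ₖ pₖ S(Uₖ ρₖ Uₖ†) + ∑ₖ pₖ D(Uₖ ρₖ Uₖ† ‖ σ)`, and `S` is unitarily invariant, so the
hypothesis says `∑ₖ pₖ D(Uₖ ρₖ Uₖ† ‖ σ) = 0`. By Klein's inequality every relative entropy is
nonnegative and vanishes only when `Uₖ ρₖ Uₖ† = σ`; hence `U₀ ρ₀ U₀† = U₁ ρ₁ U₁†`.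

Klein's inequality is proved in eigenbases `ρ = ∑ λᵢ |uᵢ⟩⟨uᵢ|`, `σ = ∑ μⱼ |vⱼ⟩⟨vⱼ|`: with the
doubly stochastic overlaps `Pᵢⱼ = |⟨uᵢ, vⱼ⟩|²` and `tr ρ = tr σ`,
`D(ρ‖σ) = ∑ᵢⱼ Pᵢⱼ (λᵢ log λᵢ - λᵢ log μⱼ - (λᵢ - μⱼ))`, a sum of terms that are nonnegative
and vanish only when `λᵢ = μⱼ` wherever `Pᵢⱼ ≠ 0`, which makes the two spectral
decompositions coincide.
-/

open Real InformationTheory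

lemma mul_klFun_div {x y : ℝ} (hy : 0 < y) :
    y * klFun (x / y) = x * log x - x * log y - (x - y) := by
  rcases eq_or_ne x 0 with rfl | hx
  · simp [klFun]
  rw [klFun, log_div hx hy.ne']
  field_simp
  ring

lemma mul_log_sub_mul_log_sub_sub_nonneg {x y : ℝ} (hx : 0 ≤ x) (hy : 0 ≤ y)
    (hxy : y = 0 → x = 0) : 0 ≤ x * log x - x * log y - (x - y) := by
  rcases hy.eq_or_lt with rfl | hy
  · simp [hxy rfl]
  rw [← mul_klFun_div hy]
  exact mul_nonneg hy.le (klFun_nonneg (div_nonneg hx hy.le))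

lemma eq_of_mul_log_sub_mul_log_sub_sub_eq_zero {x y : ℝ} (hx : 0 ≤ x) (hy : 0 ≤ y)
    (hxy : y = 0 → x = 0) (h : x * log x - x * log y - (x - y) = 0) : x = y := by
  rcases hy.eq_or_lt with rfl | hy
  · exact hxy rfl
  rw [← mul_klFun_div hy, mul_eq_zero, klFun_eq_zero_iff (div_nonneg hx hy.le),
    div_eq_one_iff_eq hy.ne'] at h
  exact h.resolve_left hy.ne'

section DoublyStochastic

variable {n : Type*} [Fintype n] [DecidableEq n] {M : Matrix n n ℝ} {a b : n → ℝ}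

lemma sum_mul_log_sub_sum_sum_mul_log_eq (hM : M ∈ doublyStochastic ℝ n)
    (hab : ∑ i, a i = ∑ j, b j) :
    ∑ i, a i * log (a i) - ∑ i, ∑ j, M i j * (a i * log (b j)) =
      ∑ i, ∑ j, M i j * (a i * log (a i) - a i * log (b j) - (a i - b j)) := by
  have hrow (f : n → ℝ) : ∑ i, ∑ j, M i j * f i = ∑ i, f i := by
    simp only [← Finset.sum_mul, sum_row_of_mem_doublyStochastic hM, one_mul]
  have hcol (f : n → ℝ) : ∑ i, ∑ j, M i j * f j = ∑ j, f j := by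
    rw [Finset.sum_comm]
    simp only [← Finset.sum_mul, sum_col_of_mem_doublyStochastic hM, one_mul]
  simp only [mul_sub, Finset.sum_sub_distrib, hrow, hcol, hab]
  ring

lemma mul_mul_log_sub_nonneg_of_mem_doublyStochastic (hM : M ∈ doublyStochastic ℝ n)
    (ha : ∀ i, 0 ≤ a i) (hb : ∀ j, 0 ≤ b j) (hsupp : ∀ i j, M i j ≠ 0 → b j = 0 → a i = 0)
    (i j : n) : 0 ≤ M i j * (a i * log (a i) - a i * log (b j) - (a i - b j)) := by
  rcases eq_or_ne (M i j) 0 with hij | hij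
  · simp [hij]
  exact mul_nonneg (nonneg_of_mem_doublyStochastic hM)
    (mul_log_sub_mul_log_sub_sub_nonneg (ha i) (hb j) (hsupp i j hij))

lemma sum_mul_log_sub_sum_sum_mul_log_nonneg (hM : M ∈ doublyStochastic ℝ n)
    (ha : ∀ i, 0 ≤ a i) (hb : ∀ j, 0 ≤ b j) (hab : ∑ i, a i = ∑ j, b j)
    (hsupp : ∀ i j, M i j ≠ 0 → b j = 0 → a i = 0) :
    0 ≤ ∑ i, a i * log (a i) - ∑ i, ∑ j, M i j * (a i * log (b j)) := by
  rw [sum_mul_log_sub_sum_sum_mul_log_eq hM hab]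
  exact Finset.sum_nonneg fun i _ => Finset.sum_nonneg fun j _ =>
    mul_mul_log_sub_nonneg_of_mem_doublyStochastic hM ha hb hsupp i j

lemma eq_of_sum_mul_log_sub_sum_sum_mul_log_eq_zero (hM : M ∈ doublyStochastic ℝ n)
    (ha : ∀ i, 0 ≤ a i) (hb : ∀ j, 0 ≤ b j) (hab : ∑ i, a i = ∑ j, b j)
    (hsupp : ∀ i j, M i j ≠ 0 → b j = 0 → a i = 0)
    (h : ∑ i, a i * log (a i) - ∑ i, ∑ j, M i j * (a i * log (b j)) = 0) :
    ∀ i j, M i j ≠ 0 → a i = b j := by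
  intro i j hij
  have hterm := mul_mul_log_sub_nonneg_of_mem_doublyStochastic hM ha hb hsupp
  rw [sum_mul_log_sub_sum_sum_mul_log_eq hM hab,
    Finset.sum_eq_zero_iff_of_nonneg fun i _ => Finset.sum_nonneg fun j _ => hterm i j] at h
  have hij0 := (Finset.sum_eq_zero_iff_of_nonneg fun j _ => hterm i j).mp
    (h i (Finset.mem_univ i)) j (Finset.mem_univ j)
  exact eq_of_mul_log_sub_mul_log_sub_sub_eq_zero (ha i) (hb j) (hsupp i j hij)
    ((mul_eq_zero.mp hij0).resolve_left hij)

end DoublyStochastic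

namespace Matrix

variable {n : Type*} [Fintype n] [DecidableEq n]

lemma exists_unitary_conj_eq_of_conj_eq {U V ρ τ : Matrix n n ℂ} (hU : U ∈ unitaryGroup n ℂ)
    (hV : V ∈ unitaryGroup n ℂ) (h : U * ρ * Uᴴ = V * τ * Vᴴ) :
    ∃ W ∈ unitaryGroup n ℂ, W * ρ * Wᴴ = τ := by
  refine ⟨Vᴴ * U, mul_mem (Unitary.star_mem hV) hU, ?_⟩
  have hVV : Vᴴ * V = 1 := by rw [← star_eq_conjTranspose, mem_unitaryGroup_iff'.mp hV]
  calc Vᴴ * U * ρ * (Vᴴ * U)ᴴ = Vᴴ * (U * ρ * Uᴴ) * V := by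
        simp only [conjTranspose_mul, conjTranspose_conjTranspose, Matrix.mul_assoc]
    _ = τ := by
        rw [h]
        simp only [Matrix.mul_assoc, hVV, Matrix.mul_one]
        rw [← Matrix.mul_assoc, hVV, Matrix.one_mul]

lemma map_normSq_mem_doublyStochastic {W : Matrix n n ℂ} (hW : W ∈ unitaryGroup n ℂ) :
    W.map Complex.normSq ∈ doublyStochastic ℝ n := by
  rw [mem_doublyStochastic_iff_sum]
  refine ⟨fun i j => Complex.normSq_nonneg _, fun i => ?_, fun j => ?_⟩
  · have h := congr_fun₂ (mem_unitaryGroup_iff.mp hW) i i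
    simp only [mul_apply, star_apply, one_apply_eq, RCLike.star_def, Complex.mul_conj] at h
    exact_mod_cast h
  · have h := congr_fun₂ (mem_unitaryGroup_iff'.mp hW) j j
    simp only [mul_apply, star_apply, one_apply_eq, RCLike.star_def, mul_comm _ (W _ j),
      Complex.mul_conj] at h
    exact_mod_cast h

lemma conjTranspose_mul_diagonal_mul_apply_self (W : Matrix n n ℂ) (a : n → ℝ) (j : n) :
    (Wᴴ * diagonal (fun i => (a i : ℂ)) * W) j j =
      ((∑ i, a i * Complex.normSq (W i j) : ℝ) : ℂ) := by
  simp only [mul_apply, conjTranspose_apply, diagonal_apply, mul_ite, mul_zero,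
    Finset.sum_ite_eq', Finset.mem_univ, if_true]
  push_cast
  refine Finset.sum_congr rfl fun i _ => ?_
  rw [← Complex.mul_conj, RCLike.star_def]
  ring

lemma re_trace_conj_diagonal_mul_conj_diagonal (U V : Matrix n n ℂ) (a b : n → ℝ) :
    (U * diagonal (fun i => (a i : ℂ)) * Uᴴ * (V * diagonal (fun j => (b j : ℂ)) * Vᴴ)).trace.re =
      ∑ i, ∑ j, Complex.normSq ((Uᴴ * V) i j) * (a i * b j) := by
  have hcyc (X Y : Matrix n n ℂ) :
      (U * X * Uᴴ * (V * Y * Vᴴ)).trace = ((Uᴴ * V)ᴴ * X * (Uᴴ * V) * Y).trace := by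
    rw [conjTranspose_mul, conjTranspose_conjTranspose, ← Matrix.mul_assoc, trace_mul_comm]
    simp only [Matrix.mul_assoc]
  rw [hcyc, Finset.sum_comm]
  simp only [trace, diag_apply, mul_diagonal, conjTranspose_mul_diagonal_mul_apply_self]
  simp only [← Complex.ofReal_mul, Complex.re_sum, Complex.ofReal_re, Finset.sum_mul]
  refine Finset.sum_congr rfl fun j _ => Finset.sum_congr rfl fun i _ => ?_
  ring

namespace IsHermitian

variable {A B : Matrix n n ℂ}

lemma eq_conj_diagonal (hA : A.IsHermitian) :
    A = (hA.eigenvectorUnitary : Matrix n n ℂ) * diagonal (fun i => (hA.eigenvalues i : ℂ)) *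
      (hA.eigenvectorUnitary : Matrix n n ℂ)ᴴ :=
  hA.spectral_theorem

lemma eigenvectorUnitary_conjTranspose_mul_self (hA : A.IsHermitian) :
    (hA.eigenvectorUnitary : Matrix n n ℂ)ᴴ * hA.eigenvectorUnitary = 1 :=
  Unitary.coe_star_mul_self _

lemma eigenvectorUnitary_mul_conjTranspose_self (hA : A.IsHermitian) :
    (hA.eigenvectorUnitary : Matrix n n ℂ) * (hA.eigenvectorUnitary : Matrix n n ℂ)ᴴ = 1 :=
  Unitary.coe_mul_star_self _

noncomputable def eigenOverlap (hA : A.IsHermitian) (hB : B.IsHermitian) : Matrix n n ℝ :=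
  ((hA.eigenvectorUnitary : Matrix n n ℂ)ᴴ * hB.eigenvectorUnitary).map Complex.normSq

lemma eigenOverlap_mem_doublyStochastic (hA : A.IsHermitian) (hB : B.IsHermitian) :
    hA.eigenOverlap hB ∈ doublyStochastic ℝ n :=
  map_normSq_mem_doublyStochastic <|
    mul_mem (Unitary.star_mem hA.eigenvectorUnitary.2) hB.eigenvectorUnitary.2

lemma eigenOverlap_self (hA : A.IsHermitian) : hA.eigenOverlap hA = 1 := by
  rw [eigenOverlap, eigenvectorUnitary_conjTranspose_mul_self]
  exact Matrix.map_one _ (map_zero _) (map_one _)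

lemma eq_of_eigenOverlap_ne_zero (hA : A.IsHermitian) (hB : B.IsHermitian)
    (h : ∀ i j, hA.eigenOverlap hB i j ≠ 0 → hA.eigenvalues i = hB.eigenvalues j) : A = B := by
  set U := (hA.eigenvectorUnitary : Matrix n n ℂ)
  set V := (hB.eigenvectorUnitary : Matrix n n ℂ)
  set W := Uᴴ * V with hW
  have hintertwine : diagonal (fun i => (hA.eigenvalues i : ℂ)) * W =
      W * diagonal (fun j => (hB.eigenvalues j : ℂ)) := by
    ext i j
    rw [diagonal_mul, mul_diagonal]
    rcases eq_or_ne (W i j) 0 with hij | hij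
    · simp [hij]
    · rw [h i j (by simpa [eigenOverlap] using hij), mul_comm]
  have hWW : W * Wᴴ = 1 := by
    rw [hW, conjTranspose_mul, conjTranspose_conjTranspose, Matrix.mul_assoc, ← Matrix.mul_assoc V,
      hB.eigenvectorUnitary_mul_conjTranspose_self, Matrix.one_mul,
      hA.eigenvectorUnitary_conjTranspose_mul_self]
  have hUW : U * W = V := by
    rw [hW, ← Matrix.mul_assoc, hA.eigenvectorUnitary_mul_conjTranspose_self, Matrix.one_mul]
  calc A = U * (diagonal (fun i => (hA.eigenvalues i : ℂ)) * W * Wᴴ) * Uᴴ := by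
        rw [Matrix.mul_assoc _ W, hWW, Matrix.mul_one]
        exact hA.eq_conj_diagonal
    _ = U * W * diagonal (fun j => (hB.eigenvalues j : ℂ)) * (U * W)ᴴ := by
        rw [hintertwine, conjTranspose_mul U W]
        simp only [Matrix.mul_assoc]
    _ = B := by rw [hUW, ← hB.eq_conj_diagonal]

lemma conjTranspose_eigenvectorUnitary_mul_mul_apply_self (hA : A.IsHermitian)
    (hB : B.IsHermitian) (j : n) :
    ((hB.eigenvectorUnitary : Matrix n n ℂ)ᴴ * A * hB.eigenvectorUnitary) j j =
      ((∑ i, hA.eigenvalues i * hA.eigenOverlap hB i j : ℝ) : ℂ) := by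
  set U := (hA.eigenvectorUnitary : Matrix n n ℂ)
  set V := (hB.eigenvectorUnitary : Matrix n n ℂ)
  have hA' := congrArg (fun X => Vᴴ * X * V) hA.eq_conj_diagonal
  calc (Vᴴ * A * V) j j
      = ((Uᴴ * V)ᴴ * diagonal (fun i => (hA.eigenvalues i : ℂ)) * (Uᴴ * V)) j j := by
        rw [hA', conjTranspose_mul, conjTranspose_conjTranspose]
        simp only [Matrix.mul_assoc]
        rfl
    _ = _ := conjTranspose_mul_diagonal_mul_apply_self _ _ _

lemma conjTranspose_eigenvectorUnitary_mul_mul_self (hA : A.IsHermitian) :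
    (hA.eigenvectorUnitary : Matrix n n ℂ)ᴴ * A * hA.eigenvectorUnitary =
      diagonal (fun i => (hA.eigenvalues i : ℂ)) := by
  have hA' := congrArg (fun X => (hA.eigenvectorUnitary : Matrix n n ℂ)ᴴ * X *
    hA.eigenvectorUnitary) hA.eq_conj_diagonal
  rw [hA']
  simp only [Matrix.mul_assoc, hA.eigenvectorUnitary_conjTranspose_mul_self, Matrix.mul_one]
  rw [← Matrix.mul_assoc, hA.eigenvectorUnitary_conjTranspose_mul_self, Matrix.one_mul]

lemma sum_eigenvalues_eq_of_trace_eq (hA : A.IsHermitian) (hB : B.IsHermitian)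
    (htr : A.trace = B.trace) : ∑ i, hA.eigenvalues i = ∑ j, hB.eigenvalues j := by
  rw [hA.trace_eq_sum_eigenvalues, hB.trace_eq_sum_eigenvalues] at htr
  exact_mod_cast htr

end IsHermitian

/- Because `Real.log 0 = 0`, Klein's inequality needs `ker σ ⊆ ker ρ`; this is that inclusion
in eigenbases, forced by `c • ρ ≤ σ`. -/
lemma PosSemidef.eigenvalues_eq_zero_of_eigenOverlap_ne_zero {ρ σ : Matrix n n ℂ}
    (hρ : ρ.PosSemidef) (hσ : σ.IsHermitian) {c : ℝ} (hc : 0 < c)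
    (hle : (σ - (c : ℂ) • ρ).PosSemidef) {i j : n}
    (hij : hρ.isHermitian.eigenOverlap hσ i j ≠ 0) (hj : hσ.eigenvalues j = 0) :
    hρ.isHermitian.eigenvalues i = 0 := by
  set V := (hσ.eigenvectorUnitary : Matrix n n ℂ)
  set S := ∑ i, hρ.isHermitian.eigenvalues i * hρ.isHermitian.eigenOverlap hσ i j
  have hterm_nonneg : ∀ i, 0 ≤ hρ.isHermitian.eigenvalues i * hρ.isHermitian.eigenOverlap hσ i j :=
    fun i => mul_nonneg (hρ.eigenvalues_nonneg i) (Complex.normSq_nonneg _)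
  have hS : S ≤ 0 := by
    have hdiag := (hle.conjTranspose_mul_mul_same V).diag_nonneg (i := j)
    rw [Matrix.mul_sub, Matrix.sub_mul, Matrix.mul_smul, Matrix.smul_mul, Matrix.sub_apply,
      Matrix.smul_apply, hσ.conjTranspose_eigenvectorUnitary_mul_mul_self,
      hρ.isHermitian.conjTranspose_eigenvectorUnitary_mul_mul_apply_self hσ, diagonal_apply_eq,
      hj, smul_eq_mul, ← Complex.ofReal_mul, ← Complex.ofReal_sub, Complex.zero_le_real] at hdiag
    nlinarith
  have hS0 := (Finset.sum_eq_zero_iff_of_nonneg fun i _ => hterm_nonneg i).mp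
    (le_antisymm hS (Finset.sum_nonneg fun i _ => hterm_nonneg i)) i (Finset.mem_univ i)
  exact (mul_eq_zero.mp hS0).resolve_right hij

end Matrix

section Entropy

variable {n : Type*} [Fintype n] [DecidableEq n] {ρ σ : Matrix n n ℂ}

lemma matLog_eq_conj_diagonal (hρ : ρ.IsHermitian) :
    matLog ρ = (hρ.eigenvectorUnitary : Matrix n n ℂ) *
      diagonal (fun i => (log (hρ.eigenvalues i) : ℂ)) *
      (hρ.eigenvectorUnitary : Matrix n n ℂ)ᴴ := by
  rw [matLog, dif_pos hρ, star_eq_conjTranspose]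

lemma re_trace_mul_matLog (hρ : ρ.IsHermitian) (hσ : σ.IsHermitian) :
    (ρ * matLog σ).trace.re =
      ∑ i, ∑ j, hρ.eigenOverlap hσ i j * (hρ.eigenvalues i * log (hσ.eigenvalues j)) := by
  conv_lhs => rw [hρ.eq_conj_diagonal, matLog_eq_conj_diagonal hσ]
  exact re_trace_conj_diagonal_mul_conj_diagonal _ _ _ _

lemma re_trace_mul_matLog_self (hρ : ρ.IsHermitian) :
    (ρ * matLog ρ).trace.re = ∑ i, hρ.eigenvalues i * log (hρ.eigenvalues i) := by
  simp [re_trace_mul_matLog hρ hρ, hρ.eigenOverlap_self, one_apply]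

lemma vnEntropy_eq_neg_re_trace_mul_matLog (hρ : ρ.IsHermitian) :
    vnEntropy ρ = -(ρ * matLog ρ).trace.re := by
  rw [vnEntropy, dif_pos hρ, re_trace_mul_matLog_self hρ]

lemma relEntropy_eq_neg_vnEntropy_sub (hρ : ρ.IsHermitian) :
    relEntropy ρ σ = -vnEntropy ρ - (ρ * matLog σ).trace.re := by
  rw [relEntropy, Matrix.mul_sub, trace_sub, Complex.sub_re,
    vnEntropy_eq_neg_re_trace_mul_matLog hρ, neg_neg]

lemma relEntropy_eq_sum (hρ : ρ.IsHermitian) (hσ : σ.IsHermitian) :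
    relEntropy ρ σ = ∑ i, hρ.eigenvalues i * log (hρ.eigenvalues i) -
      ∑ i, ∑ j, hρ.eigenOverlap hσ i j * (hρ.eigenvalues i * log (hσ.eigenvalues j)) := by
  rw [relEntropy_eq_neg_vnEntropy_sub hρ, vnEntropy_eq_neg_re_trace_mul_matLog hρ,
    re_trace_mul_matLog_self hρ, re_trace_mul_matLog hρ hσ, neg_neg]

lemma vnEntropy_unitary_conj {U : Matrix n n ℂ} (hU : U ∈ unitaryGroup n ℂ)
    (hρ : ρ.IsHermitian) : vnEntropy (U * ρ * Uᴴ) = vnEntropy ρ := by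
  have hUρ : (U * ρ * Uᴴ).IsHermitian := isHermitian_mul_mul_conjTranspose U hρ
  have hcharpoly : (U * ρ * Uᴴ).charpoly = ρ.charpoly := by
    rw [Matrix.mul_assoc, charpoly_mul_comm, Matrix.mul_assoc, ← star_eq_conjTranspose,
      mem_unitaryGroup_iff'.mp hU, Matrix.mul_one]
  rw [vnEntropy, dif_pos hUρ, vnEntropy, dif_pos hρ,
    (hUρ.eigenvalues_eq_eigenvalues_iff hρ).mpr hcharpoly]

theorem relEntropy_nonneg (hρ : ρ.PosSemidef) (hσ : σ.PosSemidef) (htr : ρ.trace = σ.trace)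
    {c : ℝ} (hc : 0 < c) (hle : (σ - (c : ℂ) • ρ).PosSemidef) : 0 ≤ relEntropy ρ σ := by
  rw [relEntropy_eq_sum hρ.isHermitian hσ.isHermitian]
  exact sum_mul_log_sub_sum_sum_mul_log_nonneg (IsHermitian.eigenOverlap_mem_doublyStochastic _ _)
    hρ.eigenvalues_nonneg hσ.eigenvalues_nonneg
    (hρ.isHermitian.sum_eigenvalues_eq_of_trace_eq _ htr)
    fun _ _ => hρ.eigenvalues_eq_zero_of_eigenOverlap_ne_zero hσ.isHermitian hc hle

theorem eq_of_relEntropy_eq_zero (hρ : ρ.PosSemidef) (hσ : σ.PosSemidef)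
    (htr : ρ.trace = σ.trace) {c : ℝ} (hc : 0 < c) (hle : (σ - (c : ℂ) • ρ).PosSemidef)
    (h : relEntropy ρ σ = 0) : ρ = σ := by
  rw [relEntropy_eq_sum hρ.isHermitian hσ.isHermitian] at h
  exact hρ.isHermitian.eq_of_eigenOverlap_ne_zero hσ.isHermitian <|
    eq_of_sum_mul_log_sub_sum_sum_mul_log_eq_zero
      (IsHermitian.eigenOverlap_mem_doublyStochastic _ _)
      hρ.eigenvalues_nonneg hσ.eigenvalues_nonneg
      (hρ.isHermitian.sum_eigenvalues_eq_of_trace_eq _ htr)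
      (fun _ _ => hρ.eigenvalues_eq_zero_of_eigenOverlap_ne_zero hσ.isHermitian hc hle) h

end Entropy

section Mixture

variable {n ι : Type*} [Fintype n] [DecidableEq n] [Fintype ι]

theorem vnEntropy_sum_smul (p : ι → ℝ) {ρ : ι → Matrix n n ℂ} (hρ : ∀ k, (ρ k).IsHermitian) :
    vnEntropy (∑ k, (p k : ℂ) • ρ k) = ∑ k, p k * vnEntropy (ρ k) +
      ∑ k, p k * relEntropy (ρ k) (∑ l, (p l : ℂ) • ρ l) := by
  set σ := ∑ k, (p k : ℂ) • ρ k
  have hσ : σ.IsHermitian := isSelfAdjoint_sum _ fun k _ => (hρ k).smul (Complex.conj_ofReal (p k))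
  have hlin : (σ * matLog σ).trace.re = ∑ k, p k * (ρ k * matLog σ).trace.re := by
    simp only [σ, Finset.sum_mul, trace_sum, Matrix.smul_mul, trace_smul, smul_eq_mul,
      Complex.re_sum, Complex.re_ofReal_mul]
  simp only [vnEntropy_eq_neg_re_trace_mul_matLog hσ, relEntropy_eq_neg_vnEntropy_sub (hρ _),
    hlin, mul_sub, mul_neg, Finset.sum_sub_distrib, Finset.sum_neg_distrib]
  ring

lemma IsDensityMatrix.unitary_conj {ρ U : Matrix n n ℂ} (hρ : IsDensityMatrix ρ)
    (hU : U ∈ unitaryGroup n ℂ) : IsDensityMatrix (U * ρ * Uᴴ) :=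
  ⟨hρ.1.mul_mul_conjTranspose_same U, by
    rw [trace_mul_cycle, ← star_eq_conjTranspose, mem_unitaryGroup_iff'.mp hU, Matrix.one_mul,
      hρ.2]⟩

theorem eq_sum_smul_of_vnEntropy_sum_smul_eq {p : ι → ℝ} {ρ : ι → Matrix n n ℂ}
    (hp : ∀ k, 0 < p k) (hsum : ∑ k, p k = 1) (hρ : ∀ k, IsDensityMatrix (ρ k))
    (heq : vnEntropy (∑ k, (p k : ℂ) • ρ k) = ∑ k, p k * vnEntropy (ρ k)) (k : ι) :
    ρ k = ∑ l, (p l : ℂ) • ρ l := by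
  classical
  set σ := ∑ l, (p l : ℂ) • ρ l
  have hsmul (l : ι) : ((p l : ℂ) • ρ l).PosSemidef :=
    (hρ l).1.smul (Complex.zero_le_real.mpr (hp l).le)
  have hσ : σ.PosSemidef := posSemidef_sum _ fun l _ => hsmul l
  have hle (k : ι) : (σ - (p k : ℂ) • ρ k).PosSemidef := by
    rw [← Finset.sum_erase_eq_sub (Finset.mem_univ k)]
    exact posSemidef_sum _ fun l _ => hsmul l
  have htr (k : ι) : (ρ k).trace = σ.trace := by
    simp only [σ, trace_sum, trace_smul, (hρ _).2, smul_eq_mul, mul_one]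
    exact_mod_cast hsum.symm
  have hD (k : ι) : 0 ≤ p k * relEntropy (ρ k) σ :=
    mul_nonneg (hp k).le (relEntropy_nonneg (hρ k).1 hσ (htr k) (hp k) (hle k))
  have hD0 : ∑ k, p k * relEntropy (ρ k) σ = 0 := by
    linarith [vnEntropy_sum_smul p fun k => (hρ k).1.isHermitian]
  have hDk := (Finset.sum_eq_zero_iff_of_nonneg fun k _ => hD k).mp hD0 k (Finset.mem_univ k)
  exact eq_of_relEntropy_eq_zero (hρ k).1 hσ (htr k) (hp k) (hle k)
    ((mul_eq_zero.mp hDk).resolve_left (hp k).ne')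

end Mixture

/-- if `Σ_k p_k S(ρ_2^{(k)}) = S(Σ_k p_k U_k ρ_2^{(k)} U_k†)` for a
binary measurement with `p_0, p_1 > 0`, then the two post-measurement states are
unitarily equivalent. -/
theorem binary_equality_implies_LU {n : Type*} [Fintype n] [DecidableEq n]
    (p : Fin 2 → ℝ) (ρ2 : Fin 2 → Matrix n n ℂ) (U : Fin 2 → Matrix n n ℂ)
    (hp : ∀ k, 0 < p k) (hsum : ∑ k, p k = 1)
    (hρ2 : ∀ k, IsDensityMatrix (ρ2 k))
    (hU : ∀ k, U k ∈ Matrix.unitaryGroup n ℂ)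
    (heq : ∑ k, p k * vnEntropy (ρ2 k) =
      vnEntropy (∑ k, (p k : ℂ) • (U k * ρ2 k * (U k)ᴴ))) :
    ∃ W ∈ Matrix.unitaryGroup n ℂ, W * ρ2 0 * Wᴴ = ρ2 1 := by
  have hS (k : Fin 2) : vnEntropy (U k * ρ2 k * (U k)ᴴ) = vnEntropy (ρ2 k) :=
    vnEntropy_unitary_conj (hU k) (hρ2 k).1.isHermitian
  have hmix := eq_sum_smul_of_vnEntropy_sum_smul_eq hp hsum
    (fun k => (hρ2 k).unitary_conj (hU k)) (by simp only [hS]; exact heq.symm)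
  exact exists_unitary_conj_eq_of_conj_eq (hU 0) (hU 1) ((hmix 0).trans (hmix 1).symm)
end
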